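/- arXiv:2203.15467 — 2 statements merged into one kernel-verified Lean document; each statement's English description precedes it below -/
import Mathlib

section
/- Let T be a monad on Set, F an endofunctor on Set, and λ : FT → TF a distributive law of the functor F over the monad T (i.e. λ ∘ Fη = ηF and λ ∘ Fμ = μF ∘ Tλ ∘ λT). Define λⁿ : FⁿT → TFⁿ by λ⁰ = id and λ^{n+1} = λⁿF ∘ Fⁿλ. Then setting Mₙ := TFⁿ, with unit η and multiplication μ^{n,k} := μF^{n+k} ∘ TλⁿFᵏ : TFⁿTFᵏ → TF^{n+k}, yields a graded monad. -/
open CategoryTheory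

universe u

/-- The `n`-fold composite `Fⁿ` of an endofunctor `F` on Set. -/
def pow (F : Type u ⥤ Type u) : ℕ → Type u ⥤ Type u
  | 0 => 𝟭 (Type u)
  | (n + 1) => F ⋙ pow F n

/-- `Fⁿ(FᵏX) = F^{n+k}X`. -/
theorem pow_obj (F : Type u ⥤ Type u) (n : ℕ) :
    ∀ (k : ℕ) (X : Type u), (pow F n).obj ((pow F k).obj X) = (pow F (n + k)).obj X
  | 0, _ => rfl
  | (k + 1), X => pow_obj F n k (F.obj X)

/-- The iterated distributive law `λⁿ : FⁿT → TFⁿ`, defined by `λ⁰ = id` and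
`λ^{n+1} = λⁿF ∘ Fⁿλ` (componentwise). -/
def lpow (T : Monad (Type u)) (F : Type u ⥤ Type u)
    (lam : T.toFunctor ⋙ F ⟶ F ⋙ T.toFunctor) :
    ∀ (n : ℕ) (X : Type u), (pow F n).obj (T.obj X) ⟶ T.obj ((pow F n).obj X)
  | 0, X => 𝟙 (T.obj X)
  | (n + 1), X => (pow F n).map (lam.app X) ≫ lpow T F lam n (F.obj X)

/-- The graded multiplication `μ^{n,k} := μF^{n+k} ∘ TλⁿFᵏ : TFⁿTFᵏ → TF^{n+k}`
(componentwise, with the identification `Fⁿ(FᵏX) = F^{n+k}X`). -/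
def gmu (T : Monad (Type u)) (F : Type u ⥤ Type u)
    (lam : T.toFunctor ⋙ F ⟶ F ⋙ T.toFunctor) (n k : ℕ) (X : Type u) :
    T.obj ((pow F n).obj (T.obj ((pow F k).obj X))) ⟶ T.obj ((pow F (n + k)).obj X) :=
  T.map (lpow T F lam n ((pow F k).obj X))
    ≫ T.μ.app ((pow F n).obj ((pow F k).obj X))
    ≫ eqToHom (congrArg T.obj (pow_obj F n k X))

theorem pow_map (F : Type u ⥤ Type u) (n : ℕ) :
    ∀ (k : ℕ) (X Y : Type u) (f : X ⟶ Y),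
      (pow F n).map ((pow F k).map f) ≫ eqToHom (pow_obj F n k Y)
        = eqToHom (pow_obj F n k X) ≫ (pow F (n + k)).map f
  | 0, X, Y, f => by simp; rfl
  | (k + 1), X, Y, f => pow_map F n k (F.obj X) (F.obj Y) (F.map f)

section
variable (T : Monad (Type u)) (F : Type u ⥤ Type u)
    (lam : T.toFunctor ⋙ F ⟶ F ⋙ T.toFunctor)

theorem lpow_nat :
    ∀ (n : ℕ) (X Y : Type u) (f : X ⟶ Y),
      (pow F n).map (T.map f) ≫ lpow T F lam n Y
        = lpow T F lam n X ≫ T.map ((pow F n).map f)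
  | 0, X, Y, f => by
    show T.map f ≫ 𝟙 _ = 𝟙 _ ≫ T.map f
    simp
  | (n + 1), X, Y, f => by
    show (pow F n).map (F.map (T.map f)) ≫ (pow F n).map (lam.app Y)
        ≫ lpow T F lam n (F.obj Y) = _
    rw [← Category.assoc, ← (pow F n).map_comp]
    have h : F.map (T.map f) ≫ lam.app Y = lam.app X ≫ T.map (F.map f) := lam.naturality f
    rw [h, (pow F n).map_comp, Category.assoc, lpow_nat n (F.obj X) (F.obj Y) (F.map f)]
    show _ = ((pow F n).map (lam.app X) ≫ lpow T F lam n (F.obj X))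
        ≫ T.map ((pow F n).map (F.map f))
    simp

theorem lpow_unit (hlam_unit : ∀ X : Type u, F.map (T.η.app X) ≫ lam.app X = T.η.app (F.obj X)) :
    ∀ (n : ℕ) (X : Type u),
      (pow F n).map (T.η.app X) ≫ lpow T F lam n X = T.η.app ((pow F n).obj X)
  | 0, X => by
    show T.η.app X ≫ 𝟙 _ = T.η.app X
    simp
  | (n + 1), X => by
    show (pow F n).map (F.map (T.η.app X)) ≫ (pow F n).map (lam.app X)
        ≫ lpow T F lam n (F.obj X) = _
    rw [← Category.assoc, ← (pow F n).map_comp, hlam_unit X]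
    exact lpow_unit hlam_unit n (F.obj X)

theorem lpow_mul (hlam_mul : ∀ X : Type u,
      F.map (T.μ.app X) ≫ lam.app X
        = lam.app (T.obj X) ≫ T.map (lam.app X) ≫ T.μ.app (F.obj X)) :
    ∀ (n : ℕ) (X : Type u),
      (pow F n).map (T.μ.app X) ≫ lpow T F lam n X
        = lpow T F lam n (T.obj X) ≫ T.map (lpow T F lam n X)
            ≫ T.μ.app ((pow F n).obj X)
  | 0, X => by
    show T.μ.app X ≫ 𝟙 _ = 𝟙 _ ≫ T.map (𝟙 _) ≫ T.μ.app X
    simp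
  | (n + 1), X => by
    show (pow F n).map (F.map (T.μ.app X)) ≫ (pow F n).map (lam.app X)
        ≫ lpow T F lam n (F.obj X) = _
    rw [← Category.assoc, ← (pow F n).map_comp, hlam_mul X]
    rw [(pow F n).map_comp, (pow F n).map_comp, Category.assoc, Category.assoc]
    rw [lpow_mul hlam_mul n (F.obj X)]
    rw [← Category.assoc ((pow F n).map (T.map (lam.app X)))]
    rw [lpow_nat T F lam n (F.obj (T.obj X)) (T.obj (F.obj X)) (lam.app X)]
    show _ = ((pow F n).map (lam.app (T.obj X)) ≫ lpow T F lam n (F.obj (T.obj X)))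
        ≫ T.map ((pow F n).map (lam.app X) ≫ lpow T F lam n (F.obj X))
        ≫ T.μ.app ((pow F n).obj (F.obj X))
    simp

theorem lpow_comp :
    ∀ (k : ℕ) (n : ℕ) (X : Type u),
      (pow F n).map (lpow T F lam k X) ≫ lpow T F lam n ((pow F k).obj X)
          ≫ T.map (eqToHom (pow_obj F n k X))
        = eqToHom (pow_obj F n k (T.obj X)) ≫ lpow T F lam (n + k) X
  | 0, n, X => by
    show (pow F n).map (𝟙 (T.obj X)) ≫ lpow T F lam n X ≫ T.map (eqToHom _)
        = eqToHom _ ≫ lpow T F lam n X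
    simp
    show lpow T F lam n X ≫ T.map (𝟙 _) = 𝟙 _ ≫ lpow T F lam n X
    simp
  | (k + 1), n, X => by
    show (pow F n).map ((pow F k).map (lam.app X) ≫ lpow T F lam k (F.obj X))
        ≫ lpow T F lam n ((pow F k).obj (F.obj X))
        ≫ T.map (eqToHom (pow_obj F n k (F.obj X))) = _
    rw [(pow F n).map_comp, Category.assoc, lpow_comp k n (F.obj X)]
    show (pow F n).map ((pow F k).map (lam.app X))
        ≫ eqToHom (pow_obj F n k (T.obj (F.obj X)))
        ≫ lpow T F lam (n + k) (F.obj X) = _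
    rw [← Category.assoc, pow_map F n k _ _ (lam.app X)]
    rfl

theorem lpow_congr (n : ℕ) {X Y : Type u} (h : X = Y) :
    lpow T F lam n Y
      = eqToHom (by rw [h]) ≫ lpow T F lam n X ≫ eqToHom (by rw [h]) := by
  subst h; simp

theorem mu_congr {X Y : Type u} (h : X = Y) :
    T.μ.app Y = eqToHom (by rw [h]) ≫ T.μ.app X ≫ eqToHom (by rw [h]) := by
  subst h; simp

theorem core_assoc (hlam_mul : ∀ X : Type u,
      F.map (T.μ.app X) ≫ lam.app X
        = lam.app (T.obj X) ≫ T.map (lam.app X) ≫ T.μ.app (F.obj X))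
    (n k : ℕ) (A : Type u) :
    T.map ((pow F n).map (T.map (lpow T F lam k A) ≫ T.μ.app ((pow F k).obj A)))
        ≫ T.map (lpow T F lam n ((pow F k).obj A))
        ≫ T.μ.app ((pow F n).obj ((pow F k).obj A))
      = T.map (lpow T F lam n ((pow F k).obj (T.obj A)))
        ≫ T.μ.app ((pow F n).obj ((pow F k).obj (T.obj A)))
        ≫ T.map ((pow F n).map (lpow T F lam k A))
        ≫ T.map (lpow T F lam n ((pow F k).obj A))
        ≫ T.μ.app ((pow F n).obj ((pow F k).obj A)) := by
  rw [Functor.map_comp, T.map_comp, Category.assoc,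
    ← Category.assoc (T.map ((pow F n).map (T.μ.app ((pow F k).obj A)))), ← T.map_comp,
    lpow_mul T F lam hlam_mul n ((pow F k).obj A), T.map_comp, T.map_comp,
    Category.assoc, Category.assoc,
    ← Category.assoc (T.map ((pow F n).map (T.map (lpow T F lam k A)))), ← T.map_comp,
    lpow_nat T F lam n _ _ (lpow T F lam k A), T.map_comp, Category.assoc]
  congr 1
  have nat : ∀ {X Y : Type u} (f : X ⟶ Y),
      T.map (T.map f) ≫ T.μ.app Y = T.μ.app X ≫ T.map f := fun f => T.μ.naturality f
  rw [Monad.assoc,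
    ← Category.assoc (T.map (T.map (lpow T F lam n ((pow F k).obj A)))), nat,
    Category.assoc,
    ← Category.assoc (T.map (T.map ((pow F n).map (lpow T F lam k A)))), nat,
    Category.assoc]

end

/-- for a monad `T` on Set, an endofunctor `F` on Set and a
distributive law `λ : FT → TF` of the functor `F` over the monad `T`, setting
`Mₙ := TFⁿ`, with unit `η` (of `T`) and multiplication
`μ^{n,k} := μF^{n+k} ∘ TλⁿFᵏ`, yields a graded monad: naturality, both unit
laws and associativity hold. -/
theorem kleisli_distributive_graded_monad (T : Monad (Type u)) (F : Type u ⥤ Type u)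
    (lam : T.toFunctor ⋙ F ⟶ F ⋙ T.toFunctor)
    (hlam_unit : ∀ X : Type u, F.map (T.η.app X) ≫ lam.app X = T.η.app (F.obj X))
    (hlam_mul : ∀ X : Type u,
      F.map (T.μ.app X) ≫ lam.app X
        = lam.app (T.obj X) ≫ T.map (lam.app X) ≫ T.μ.app (F.obj X)) :
    (∀ (n k : ℕ) (X Y : Type u) (f : X ⟶ Y),
      T.map ((pow F n).map (T.map ((pow F k).map f))) ≫ gmu T F lam n k Y
        = gmu T F lam n k X ≫ T.map ((pow F (n + k)).map f)) ∧
    (∀ (n : ℕ) (X : Type u),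
      T.map ((pow F n).map (T.η.app X)) ≫ gmu T F lam n 0 X
        = 𝟙 (T.obj ((pow F n).obj X))) ∧
    (∀ (n : ℕ) (X : Type u),
      T.η.app (T.obj ((pow F n).obj X)) ≫ gmu T F lam 0 n X
        = eqToHom (congrArg (fun i => T.obj ((pow F i).obj X)) (Nat.zero_add n)).symm) ∧
    (∀ (n k m : ℕ) (X : Type u),
      T.map ((pow F n).map (gmu T F lam k m X)) ≫ gmu T F lam n (k + m) X
        = gmu T F lam n k (T.obj ((pow F m).obj X)) ≫ gmu T F lam (n + k) m X
            ≫ eqToHom (congrArg (fun i => T.obj ((pow F i).obj X)) (Nat.add_assoc n k m))) := by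
  have nat : ∀ {X Y : Type u} (f : X ⟶ Y),
      T.map (T.map f) ≫ T.μ.app Y = T.μ.app X ≫ T.map f := fun f => T.μ.naturality f
  refine ⟨?_, ?_, ?_, ?_⟩
  · -- naturality
    intro n k X Y f
    unfold gmu
    have h2 : T.map ((pow F n).map ((pow F k).map f))
          ≫ eqToHom (congrArg T.obj (pow_obj F n k Y))
        = eqToHom (congrArg T.obj (pow_obj F n k X))
          ≫ T.map ((pow F (n + k)).map f) := by
      rw [← eqToHom_map T.toFunctor (pow_obj F n k Y), ← eqToHom_map T.toFunctor (pow_obj F n k X), ← T.map_comp, ← T.map_comp,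
        pow_map]
    rw [← Category.assoc, ← T.map_comp, lpow_nat T F lam n _ _ ((pow F k).map f),
      T.map_comp, Category.assoc, ← Category.assoc (T.map (T.map ((pow F n).map ((pow F k).map f)))),
      nat, Category.assoc, h2]
    simp
  · -- right unit
    intro n X
    show T.map ((pow F n).map (T.η.app X))
        ≫ T.map (lpow T F lam n X) ≫ T.μ.app ((pow F n).obj X) ≫ eqToHom rfl = 𝟙 _
    rw [eqToHom_refl, Category.comp_id, ← Category.assoc, ← T.map_comp,
      lpow_unit T F lam hlam_unit n X]
    exact T.right_unit ((pow F n).obj X)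
  · -- left unit
    intro n X
    show T.η.app (T.obj ((pow F n).obj X)) ≫ T.map (𝟙 (T.obj ((pow F n).obj X))) ≫ T.μ.app ((pow F n).obj X)
        ≫ eqToHom (congrArg T.obj (pow_obj F 0 n X)) = _
    rw [CategoryTheory.Functor.map_id, Category.id_comp, ← Category.assoc, T.left_unit,
      Category.id_comp]
  · -- associativity
    intro n k m X
    set A := (pow F m).obj X with hA
    have hcomp : lpow T F lam (n + k) A
        = eqToHom (pow_obj F n k (T.obj A)).symm
          ≫ (pow F n).map (lpow T F lam k A)
          ≫ lpow T F lam n ((pow F k).obj A)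
          ≫ T.map (eqToHom (pow_obj F n k A)) := by
      rw [lpow_comp T F lam k n A]
      simp
    unfold gmu
    rw [lpow_congr T F lam n (pow_obj F k m X),
      mu_congr T (congrArg (pow F n).obj (pow_obj F k m X)),
      hcomp,
      mu_congr T (pow_obj F n k A)]
    simp only [Functor.map_comp, Category.assoc, eqToHom_map, eqToHom_trans,
      eqToHom_trans_assoc, eqToHom_refl, Category.id_comp, Category.comp_id]
    have H := core_assoc T F lam hlam_mul n k A
    simp only [Functor.map_comp, Category.assoc] at H
    simp only [← Category.assoc]
    congr 1
end

section
/- Let L ⊣ R : D → C be an adjunction where R is faithful and reflects isomorphisms. Then the adjoint transpose ē : LC → D of any extremal epimorphism e : C → RD is an extremal epimorphism in D. -/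
open CategoryTheory

universe v₁ v₂ u₁ u₂

/-- An extremal epimorphism: an epimorphism `f` such that whenever `f = g ≫ m`
with `m` a monomorphism, `m` is an isomorphism. -/
def IsExtremalEpi {C : Type u₁} [Category.{v₁} C] {X Y : C} (f : X ⟶ Y) : Prop :=
  Epi f ∧ ∀ ⦃Z : C⦄ (g : X ⟶ Z) (m : Z ⟶ Y), Mono m → f = g ≫ m → IsIso m

namespace CategoryTheory.Adjunction

variable {C : Type u₁} [Category.{v₁} C] {D : Type u₂} [Category.{v₂} D]
  {L : C ⥤ D} {R : D ⥤ C} (adj : L ⊣ R)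

/-- `ē = L e ≫ ε`: left adjoints preserve epimorphisms, and the counit is epi when `R` is
faithful. -/
lemma epi_homEquiv_symm [R.Faithful] {c : C} {d : D} (e : c ⟶ R.obj d) [Epi e] :
    Epi ((adj.homEquiv c d).symm e) := by
  have := Functor.preservesEpimorphisms_of_adjunction adj
  rw [adj.homEquiv_counit]
  infer_instance

lemma eq_homEquiv_comp_map_of_homEquiv_symm_eq_comp {c : C} {d z : D} {e : c ⟶ R.obj d}
    {g : L.obj c ⟶ z} {m : z ⟶ d} (h : (adj.homEquiv c d).symm e = g ≫ m) :
    e = adj.homEquiv c z g ≫ R.map m := by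
  rw [← adj.homEquiv_naturality_right, ← h, Equiv.apply_symm_apply]

end CategoryTheory.Adjunction

/-- let `L ⊣ R` be an adjunction where `R` is faithful and
reflects isomorphisms. Then the adjoint transpose `ē : LC → D` of any extremal
epimorphism `e : C → RD` is an extremal epimorphism. -/
theorem transpose_of_extremal_epi_is_extremal_epi
    {C : Type u₁} [Category.{v₁} C] {D : Type u₂} [Category.{v₂} D]
    (L : C ⥤ D) (R : D ⥤ C) (adj : L ⊣ R)
    [R.Faithful] [R.ReflectsIsomorphisms]
    {c : C} {d : D} (e : c ⟶ R.obj d) (he : IsExtremalEpi e) :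
    IsExtremalEpi ((adj.homEquiv c d).symm e) := by
  obtain ⟨he_epi, he_extremal⟩ := he
  refine ⟨adj.epi_homEquiv_symm e, fun z g m hm hfac => ?_⟩
  have := Functor.preservesMonomorphisms_of_adjunction adj
  have : IsIso (R.map m) :=
    he_extremal _ _ inferInstance (adj.eq_homEquiv_comp_map_of_homEquiv_symm_eq_comp hfac)
  exact isIso_of_reflects_iso m R
end
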